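/- arXiv:1511.01114 — 4 statements merged into one kernel-verified Lean document; each statement's English description precedes it below -/
import Mathlib

section
/- For p > 1, π_p := 2∫₀¹ (1-t^p)^{-1/p} dt equals 2π/(p sin(π/p)). -/
/-!
Substituting `x = t ^ p` turns `∫₀¹ (1 - t ^ p) ^ q dt` into `p⁻¹ B(1/p, q + 1)`. For `q = -1/p`
the two Beta arguments add up to `1`, so `B(1/p, 1 - 1/p) = Γ(1/p) Γ(1 - 1/p) = π / sin (π / p)` by
Euler's reflection formula.
-/

open Real MeasureTheory Set intervalIntegral

theorem integral_rpow_mul_one_sub_rpow {a b : ℝ} (ha : 0 < a) (hb : 0 < b) :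
    ∫ x in (0:ℝ)..1, x ^ (a - 1) * (1 - x) ^ (b - 1) = Gamma a * Gamma b / Gamma (a + b) := by
  have hbeta : Complex.betaIntegral a b =
      ((∫ x in (0:ℝ)..1, x ^ (a - 1) * (1 - x) ^ (b - 1) : ℝ) : ℂ) := by
    rw [Complex.betaIntegral, ← integral_ofReal]
    refine integral_congr fun x hx => ?_
    rw [uIcc_of_le zero_le_one] at hx
    push_cast
    rw [Complex.ofReal_cpow hx.1, ← Complex.ofReal_one, ← Complex.ofReal_sub,
      Complex.ofReal_cpow (sub_nonneg.2 hx.2)]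
    push_cast
    ring
  have key := Complex.Gamma_mul_Gamma_eq_betaIntegral (s := a) (t := b) (by simpa) (by simpa)
  rw [hbeta, ← Complex.ofReal_add, Complex.Gamma_ofReal, Complex.Gamma_ofReal,
    Complex.Gamma_ofReal] at key
  rw [eq_div_iff (Gamma_pos_of_pos (add_pos ha hb)).ne', mul_comm]
  exact_mod_cast key.symm

theorem integral_comp_rpow_zero_one_of_pos {E : Type*} [NormedAddCommGroup E] [NormedSpace ℝ E]
    (g : ℝ → E) {p : ℝ} (hp : 0 < p) :
    ∫ t in (0:ℝ)..1, (p * t ^ (p - 1)) • g (t ^ p) = ∫ x in (0:ℝ)..1, g x := by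
  have himage : (· ^ p) '' Ioc 0 1 = Ioc (0:ℝ) 1 := by
    ext x
    constructor
    · rintro ⟨t, ht, rfl⟩
      exact ⟨rpow_pos_of_pos ht.1 p, rpow_le_one ht.1.le ht.2 hp.le⟩
    · rintro ⟨hx0, hx1⟩
      refine ⟨x ^ (1 / p), ⟨rpow_pos_of_pos hx0 _, rpow_le_one hx0.le hx1 (by positivity)⟩, ?_⟩
      simp [← rpow_mul hx0.le, hp.ne']
  rw [integral_of_le zero_le_one, integral_of_le zero_le_one]
  conv_rhs => rw [← himage, integral_image_eq_integral_abs_deriv_smul measurableSet_Ioc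
    (fun t ht => (hasDerivAt_rpow_const (Or.inl ht.1.ne')).hasDerivWithinAt)
    ((rpow_left_injOn hp.ne').mono fun t ht => ht.1.le) g]
  refine setIntegral_congr_fun measurableSet_Ioc fun t ht => ?_
  rw [abs_of_pos (by have := ht.1; positivity)]

theorem integral_one_sub_rpow_rpow {p q : ℝ} (hp : 0 < p) (hq : -1 < q) :
    ∫ t in (0:ℝ)..1, (1 - t ^ p) ^ q =
      Gamma (1 / p) * Gamma (q + 1) / (p * Gamma (1 / p + (q + 1))) := by
  have hpointwise : ∀ t > (0:ℝ), (1 - t ^ p) ^ q =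
      p⁻¹ * ((p * t ^ (p - 1)) • ((t ^ p) ^ (1 / p - 1) * (1 - t ^ p) ^ (q + 1 - 1))) := by
    intro t ht
    have hpow : t ^ (p - 1) * (t ^ p) ^ (1 / p - 1) = 1 := by
      rw [← rpow_mul ht.le, ← rpow_add ht]
      field_simp
      simp
    rw [smul_eq_mul, add_sub_cancel_right]
    calc (1 - t ^ p) ^ q
        = p⁻¹ * p * (t ^ (p - 1) * (t ^ p) ^ (1 / p - 1)) * (1 - t ^ p) ^ q := by
          rw [hpow, inv_mul_cancel₀ hp.ne']; ring
      _ = _ := by ring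
  calc ∫ t in (0:ℝ)..1, (1 - t ^ p) ^ q
      = ∫ t in (0:ℝ)..1,
          p⁻¹ * ((p * t ^ (p - 1)) • ((t ^ p) ^ (1 / p - 1) * (1 - t ^ p) ^ (q + 1 - 1))) := by
        refine integral_congr_ae (ae_of_all _ fun t ht => ?_)
        rw [uIoc_of_le zero_le_one] at ht
        exact hpointwise t ht.1
    _ = p⁻¹ * ∫ x in (0:ℝ)..1, x ^ (1 / p - 1) * (1 - x) ^ (q + 1 - 1) := by
        rw [intervalIntegral.integral_const_mul,
          integral_comp_rpow_zero_one_of_pos (fun x => x ^ (1 / p - 1) * (1 - x) ^ (q + 1 - 1)) hp]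
    _ = _ := by
        rw [integral_rpow_mul_one_sub_rpow (by positivity) (by linarith)]
        field_simp

theorem pi_p_closed_form (p : ℝ) (hp : 1 < p) :
    2 * ∫ t in (0:ℝ)..1, (1 - t ^ p) ^ (-(1/p)) =
      2 * π / (p * Real.sin (π / p)) := by
  have hp0 : 0 < p := by linarith
  have hq : -1 < -(1 / p) := neg_lt_neg ((div_lt_one hp0).2 hp)
  have hsum : 1 / p + (-(1 / p) + 1) = 1 := by ring
  rw [integral_one_sub_rpow_rpow hp0 hq, hsum, Gamma_one, neg_add_eq_sub,
    Gamma_mul_Gamma_one_sub, mul_one_div]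
  ring
end

section
/- If 1 < p ≤ q < ∞ and x ∈ [0, 1/2], then sin_p(π_p x) ≥ sin_q(π_q x). -/
open Real Set

noncomputable def Fp (p y : ℝ) : ℝ := ∫ t in (0:ℝ)..y, (1 - t ^ p) ^ (-(1/p))

noncomputable def pip (p : ℝ) : ℝ := 2 * Fp p 1

/-!
Write `f_r t = (1 - t ^ r) ^ (-1/r)`. For `p ≤ q` the ratio `f_p / f_q` increases on `[0, 1)`:
its logarithm `log (1 - t^q) / q - log (1 - t^p) / p` has derivative
`t^(p-1) / (1 - t^p) - t^(q-1) / (1 - t^q)`, whose sign is that of `t^(p-1) - t^(q-1) ≥ 0`.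
Integrating `f_p t f_q s ≤ f_q t f_p s` over `t ≤ y ≤ s` gives
`F_p y / F_p 1 ≤ F_q y / F_q 1`. So if `F_p y₁ = π_p x` and `F_q y₂ = π_q x`, then
`F_q y₂ = 2x F_q 1 ≤ F_q y₁`, and `y₂ ≤ y₁` because `F_q` is increasing.
-/

open intervalIntegral MeasureTheory

theorem integral_mul_integral_le_of_mul_le_mul {f g : ℝ → ℝ} {a b c : ℝ} (hac : a ≤ c)
    (hcb : c ≤ b) (hf : IntervalIntegrable f volume a b) (hg : IntervalIntegrable g volume a b)
    (hfg : ∀ t ∈ Ioo a c, ∀ s ∈ Ioo c b, f t * g s ≤ g t * f s) :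
    (∫ t in a..c, f t) * ∫ t in a..b, g t ≤ (∫ t in a..c, g t) * ∫ t in a..b, f t := by
  have hsub₁ : uIcc a c ⊆ uIcc a b := uIcc_subset_uIcc_left (mem_uIcc_of_le hac hcb)
  have hsub₂ : uIcc c b ⊆ uIcc a b := uIcc_subset_uIcc_right (mem_uIcc_of_le hac hcb)
  have hf₁ := hf.mono_set hsub₁
  have hf₂ := hf.mono_set hsub₂
  have hg₁ := hg.mono_set hsub₁
  have hg₂ := hg.mono_set hsub₂
  have cross :
      (∫ t in a..c, f t) * (∫ s in c..b, g s) ≤ (∫ t in a..c, g t) * ∫ s in c..b, f s := by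
    rw [← intervalIntegral.integral_mul_const, ← intervalIntegral.integral_mul_const]
    refine integral_mono_on_of_le_Ioo hac (hf₁.mul_const _) (hg₁.mul_const _)
      fun t ht => ?_
    rw [← intervalIntegral.integral_const_mul, ← intervalIntegral.integral_const_mul]
    exact integral_mono_on_of_le_Ioo hcb (hg₂.const_mul _) (hf₂.const_mul _) (hfg t ht)
  rw [← integral_add_adjacent_intervals hf₁ hf₂, ← integral_add_adjacent_intervals hg₁ hg₂]
  nlinarith [cross]

theorem hasDerivAt_log_one_sub_rpow_div {p t : ℝ} (hp : 0 < p) (ht : t ∈ Ioo (0:ℝ) 1) :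
    HasDerivAt (fun t => log (1 - t ^ p) / p) (-(t ^ (p - 1) / (1 - t ^ p))) t := by
  have hpos : 0 < 1 - t ^ p := sub_pos.2 (rpow_lt_one ht.1.le ht.2 hp)
  refine (((hasDerivAt_rpow_const (Or.inl ht.1.ne')).const_sub 1).log hpos.ne').div_const p
    |>.congr_deriv ?_
  field_simp

theorem antitoneOn_log_one_sub_rpow_div_sub {p q : ℝ} (hp : 0 < p) (hpq : p ≤ q) :
    AntitoneOn (fun t => log (1 - t ^ p) / p - log (1 - t ^ q) / q) (Ico 0 1) := by
  have hq : 0 < q := hp.trans_le hpq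
  have hne {r : ℝ} (hr : 0 < r) : ∀ t ∈ Ico (0:ℝ) 1, 1 - t ^ r ≠ 0 := fun t ht =>
    (sub_pos.2 (rpow_lt_one ht.1 ht.2 hr)).ne'
  have hderiv : ∀ t ∈ Ioo (0:ℝ) 1, HasDerivAt
      (fun t => log (1 - t ^ p) / p - log (1 - t ^ q) / q)
      (t ^ (q - 1) / (1 - t ^ q) - t ^ (p - 1) / (1 - t ^ p)) t := fun t ht => by
    refine ((hasDerivAt_log_one_sub_rpow_div hp ht).sub
      (hasDerivAt_log_one_sub_rpow_div hq ht)).congr_deriv ?_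
    ring
  refine antitoneOn_of_deriv_nonpos (convex_Ico 0 1) ?_ ?_ ?_
  · have hcont {r : ℝ} (hr : 0 < r) :
        ContinuousOn (fun t : ℝ => log (1 - t ^ r) / r) (Ico 0 1) :=
      (((continuous_const.sub (continuous_rpow_const hr.le)).continuousOn).log (hne hr)).div_const r
    exact (hcont hp).sub (hcont hq)
  · rw [interior_Ico]
    exact fun t ht => (hderiv t ht).differentiableAt.differentiableWithinAt
  · rw [interior_Ico]
    intro t ht
    rw [(hderiv t ht).deriv, sub_nonpos, div_le_div_iff₀ (sub_pos.2 (rpow_lt_one ht.1.le ht.2 hq))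
      (sub_pos.2 (rpow_lt_one ht.1.le ht.2 hp))]
    have hcross : t ^ (q - 1) * t ^ p = t ^ (p - 1) * t ^ q := by
      rw [← rpow_add ht.1, ← rpow_add ht.1]; ring_nf
    have hle : t ^ (q - 1) ≤ t ^ (p - 1) := rpow_le_rpow_of_exponent_ge ht.1 ht.2.le (by linarith)
    nlinarith

theorem one_sub_rpow_rpow_neg_inv_mul_le {p q t s : ℝ} (hp : 0 < p) (hpq : p ≤ q) (ht : 0 ≤ t)
    (hts : t ≤ s) (hs : s < 1) :
    (1 - t ^ p) ^ (-(1/p)) * (1 - s ^ q) ^ (-(1/q)) ≤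
      (1 - t ^ q) ^ (-(1/q)) * (1 - s ^ p) ^ (-(1/p)) := by
  have hq : 0 < q := hp.trans_le hpq
  have hpos {x r : ℝ} (hx : x ∈ Ico (0:ℝ) 1) (hr : 0 < r) : 0 < 1 - x ^ r :=
    sub_pos.2 (rpow_lt_one hx.1 hx.2 hr)
  have htI : t ∈ Ico (0:ℝ) 1 := ⟨ht, hts.trans_lt hs⟩
  have hsI : s ∈ Ico (0:ℝ) 1 := ⟨ht.trans hts, hs⟩
  have hanti := antitoneOn_log_one_sub_rpow_div_sub hp hpq htI hsI hts
  dsimp only at hanti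
  rw [rpow_def_of_pos (hpos htI hp), rpow_def_of_pos (hpos hsI hq), rpow_def_of_pos (hpos htI hq),
    rpow_def_of_pos (hpos hsI hp), ← exp_add, ← exp_add, exp_le_exp]
  simp only [mul_neg, mul_one_div]
  linarith

theorem intervalIntegrable_one_sub_rpow_rpow_neg_inv {r : ℝ} (hr : 1 < r) :
    IntervalIntegrable (fun t : ℝ => (1 - t ^ r) ^ (-(1/r))) volume 0 1 := by
  have hexp : -1 < -(1/r) := by
    have : 1/r < 1 := (div_lt_one (by linarith)).2 hr
    linarith
  have hdom : IntervalIntegrable (fun t : ℝ => (1 - t) ^ (-(1/r))) volume 0 1 := by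
    simpa using (intervalIntegrable_rpow' hexp (a := 1) (b := 0)).comp_sub_left 1
  refine hdom.mono_fun' (by fun_prop : Measurable _).aestronglyMeasurable ?_
  rw [uIoc_of_le zero_le_one]
  refine (ae_restrict_iff' measurableSet_Ioc).2 (ae_of_all _ fun t ht => ?_)
  dsimp only
  rw [norm_of_nonneg (rpow_nonneg (sub_nonneg.2 (rpow_le_one ht.1.le ht.2 (by linarith))) _)]
  rcases ht.2.lt_or_eq with ht1 | rfl
  · exact rpow_le_rpow_of_nonpos (by linarith)
      (by linarith [rpow_le_self_of_le_one ht.1.le ht.2 hr.le])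
      (neg_nonpos.2 (by positivity))
  · rw [one_rpow]

theorem Fp_zero (r : ℝ) : Fp r 0 = 0 := integral_same

theorem strictMonoOn_Fp {r : ℝ} (hr : 1 < r) : StrictMonoOn (Fp r) (Icc 0 1) := by
  intro a ha b hb hab
  have hint := intervalIntegrable_one_sub_rpow_rpow_neg_inv hr
  have hsub {c d : ℝ} (hc : c ∈ Icc (0:ℝ) 1) (hd : d ∈ Icc (0:ℝ) 1) : uIcc c d ⊆ uIcc 0 1 :=
    uIcc_subset_uIcc (Icc_subset_uIcc hc) (Icc_subset_uIcc hd)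
  rw [Fp, Fp, ← integral_add_adjacent_intervals
    (hint.mono_set (hsub (left_mem_Icc.2 zero_le_one) ha)) (hint.mono_set (hsub ha hb))]
  refine lt_add_of_pos_right _ (intervalIntegral_pos_of_pos_on (hint.mono_set (hsub ha hb))
    (fun t ht => rpow_pos_of_pos (sub_pos.2 (rpow_lt_one ?_ ?_ (by linarith))) _) hab)
  · exact ha.1.trans ht.1.le
  · exact ht.2.trans_le hb.2

theorem Fp_one_pos {r : ℝ} (hr : 1 < r) : 0 < Fp r 1 := by
  simpa [Fp_zero] using
    strictMonoOn_Fp hr (left_mem_Icc.2 zero_le_one) (right_mem_Icc.2 zero_le_one) one_pos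

theorem exists_Fp_eq {r c : ℝ} (hr : 1 < r) (hc : c ∈ Icc 0 (Fp r 1)) :
    ∃ y ∈ Icc (0:ℝ) 1, Fp r y = c := by
  have hcont : ContinuousOn (Fp r) (Icc 0 1) := by
    have := continuousOn_primitive_interval'
      (intervalIntegrable_one_sub_rpow_rpow_neg_inv hr) left_mem_uIcc
    rwa [uIcc_of_le zero_le_one] at this
  exact intermediate_value_Icc zero_le_one hcont (by rwa [Fp_zero])

theorem Fp_mul_Fp_one_le {p q y : ℝ} (hp : 1 < p) (hpq : p ≤ q) (hy : y ∈ Icc (0:ℝ) 1) :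
    Fp p y * Fp q 1 ≤ Fp q y * Fp p 1 :=
  integral_mul_integral_le_of_mul_le_mul hy.1 hy.2
    (intervalIntegrable_one_sub_rpow_rpow_neg_inv hp)
    (intervalIntegrable_one_sub_rpow_rpow_neg_inv (hp.trans_le hpq)) fun _ ht _ hs =>
      one_sub_rpow_rpow_neg_inv_mul_le (by linarith) hpq ht.1.le (ht.2.trans hs.1).le hs.2

theorem sinp_monotone_in_p_general (p q : ℝ) (hp : 1 < p) (hpq : p ≤ q) (sp sq : ℝ → ℝ)
    (hpinv₁ : ∀ y ∈ Icc (0:ℝ) 1, sp (Fp p y) = y)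
    (hqinv₁ : ∀ y ∈ Icc (0:ℝ) 1, sq (Fp q y) = y)
    (x : ℝ) (hx : x ∈ Icc (0:ℝ) (1/2)) :
    sq (pip q * x) ≤ sp (pip p * x) := by
  have hq : 1 < q := hp.trans_le hpq
  have hmem {r : ℝ} (hr : 1 < r) : pip r * x ∈ Icc 0 (Fp r 1) := by
    rw [pip]
    constructor <;> nlinarith [Fp_one_pos hr, hx.1, hx.2]
  obtain ⟨y₁, hy₁, hFy₁⟩ := exists_Fp_eq hp (hmem hp)
  obtain ⟨y₂, hy₂, hFy₂⟩ := exists_Fp_eq hq (hmem hq)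
  rw [← hFy₁, ← hFy₂, hpinv₁ y₁ hy₁, hqinv₁ y₂ hy₂,
    ← (strictMonoOn_Fp hq).le_iff_le hy₂ hy₁, hFy₂]
  have hratio := Fp_mul_Fp_one_le hp hpq hy₁
  rw [hFy₁, pip] at hratio
  rw [pip]
  nlinarith [Fp_one_pos hp]

theorem sinp_monotone_in_p (p q : ℝ) (hp : 1 < p) (hpq : p ≤ q) (sp sq : ℝ → ℝ)
    (hpinv₁ : ∀ y ∈ Icc (0:ℝ) 1, sp (Fp p y) = y)
    (hpinv₂ : ∀ x ∈ Icc (0:ℝ) (pip p / 2), Fp p (sp x) = x)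
    (hqinv₁ : ∀ y ∈ Icc (0:ℝ) 1, sq (Fp q y) = y)
    (hqinv₂ : ∀ x ∈ Icc (0:ℝ) (pip q / 2), Fp q (sq x) = x)
    (x : ℝ) (hx : x ∈ Icc (0:ℝ) (1/2)) :
    sq (pip q * x) ≤ sp (pip p * x) :=
  sinp_monotone_in_p_general p q hp hpq sp sq hpinv₁ hqinv₁ x hx
end

section
/- For every p > 1, the series of absolute values of the Fourier cosine coefficients of cos_p(π_p ·) converges: ∑_{j=1}^∞ |b_j(p)| < ∞. -/
open Real Set

/-!
On `[0, π_p/2]` the function `s` inverts `Fp p`, so `s' = (1 - s^p)^(1/p)`, which vanishes at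
`π_p/2`. Since `s` is symmetric about `π_p/2`, `b_j` is `1 - (-1)^j` times the integral over
`[0, π_p/2]`, and an integration by parts writes it as `(jπ)⁻¹` times the integral of
`h = s^(p-1) (1 - s^p)^(2/p-1) = -(s')' ≥ 0` against a sine that is anti-periodic with
half-period `δ = π_p/j`. Pairing `x` with `x + δ` bounds such an integral by the `L¹` modulus
of continuity of `h` at `δ`. For `p < 2`, `h` is the product of a monotone and an antitone
bounded function, which gives `O(δ)`. For `p ≥ 2`, `h` is monotone and the bound is
`s'(π_p/2 - δ) ≤ (pδ)^(1/(p-1))`, because `Fp` grows at least like `(1 - u^p)^((p-1)/p) / p`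
near `1`. Either way `|b_j| = O(j^(-1-ε))` for some `ε > 0`.
-/

open intervalIntegral Function
open MeasureTheory (volume)

theorem IntervalIntegrable.mono_Icc {f : ℝ → ℝ} {a b c d : ℝ}
    (hf : IntervalIntegrable f volume a b) (hc : c ∈ Icc a b) (hd : d ∈ Icc a b) :
    IntervalIntegrable f volume c d :=
  hf.mono_set (uIcc_subset_uIcc (Icc_subset_uIcc hc) (Icc_subset_uIcc hd))

theorem StrictMonoOn.continuousOn_of_image_Icc {α β : Type*} [LinearOrder α]
    [TopologicalSpace α] [OrderTopology α] [LinearOrder β] [TopologicalSpace β]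
    [OrderTopology β] [DenselyOrdered β] {f : α → β} {a b : α}
    (hf : StrictMonoOn f (Icc a b)) (himg : f '' Icc a b = Icc (f a) (f b)) :
    ContinuousOn f (Icc a b) := by
  intro x hx
  have ha : a ∈ Icc a b := left_mem_Icc.2 (hx.1.trans hx.2)
  have hb : b ∈ Icc a b := right_mem_Icc.2 (hx.1.trans hx.2)
  rw [continuousWithinAt_iff_continuous_left'_right']
  constructor
  · rcases hx.1.eq_or_lt with rfl | hax
    · refine continuousWithinAt_of_notMem_closure ?_
      rw [eq_empty_of_forall_notMem fun y (hy : y ∈ Icc _ _ ∩ Iio _) => hy.2.not_ge hy.1.1]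
      simp
    · refine (continuousWithinAt_left_of_monotoneOn_of_image_mem_nhdsWithin hf.monotoneOn
        (Icc_mem_nhdsLE_of_mem ⟨hax, hx.2⟩) ?_).mono
          (inter_subset_right.trans Iio_subset_Iic_self)
      rw [himg]
      exact Icc_mem_nhdsLE_of_mem ⟨hf ha hx hax, hf.monotoneOn hx hb hx.2⟩
  · rcases hx.2.eq_or_lt with rfl | hxb
    · refine continuousWithinAt_of_notMem_closure ?_
      rw [eq_empty_of_forall_notMem fun y (hy : y ∈ Icc _ _ ∩ Ioi _) => hy.2.not_ge hy.1.2]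
      simp
    · refine (continuousWithinAt_right_of_monotoneOn_of_image_mem_nhdsWithin hf.monotoneOn
        (Icc_mem_nhdsGE_of_mem ⟨hx.1, hxb⟩) ?_).mono
          (inter_subset_right.trans Ioi_subset_Ici_self)
      rw [himg]
      exact Icc_mem_nhdsGE_of_mem ⟨hf.monotoneOn ha hx hx.1, hf hx hb hxb⟩

theorem abs_mul_sub_mul_le_of_monotone_antitone {a b c d M : ℝ} (ha : 0 ≤ a) (hab : a ≤ b)
    (hbM : b ≤ M) (hd : 0 ≤ d) (hdc : d ≤ c) (hc : c ≤ 1) :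
    |a * c - b * d| ≤ (b - M * d) - (a - M * c) :=
  abs_le.2 ⟨by nlinarith, by nlinarith⟩

section AntiperiodicKernel

variable {T δ : ℝ} {h K : ℝ → ℝ}

theorem abs_integral_mul_le_integral_abs {a b : ℝ} (hab : a ≤ b)
    (hint : IntervalIntegrable h volume a b) (hK : Continuous K) (hK1 : ∀ x, |K x| ≤ 1) :
    |∫ x in a..b, h x * K x| ≤ ∫ x in a..b, |h x| :=
  (abs_integral_le_integral_abs hab).trans <|
    integral_mono_on hab (hint.mul_continuousOn hK.continuousOn).abs hint.abs fun x _ => by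
      rw [abs_mul]
      exact mul_le_of_le_one_right (abs_nonneg _) (hK1 x)

theorem integral_comp_add_right_sub_eq (hint : IntervalIntegrable h volume 0 T) (hδ : 0 ≤ δ)
    (hδT : δ ≤ T) :
    ∫ x in 0..T - δ, (h (x + δ) - h x) = (∫ x in T - δ..T, h x) - ∫ x in 0..δ, h x := by
  have h0 : 0 ∈ Icc 0 T := ⟨le_rfl, hδ.trans hδT⟩
  have hT : T ∈ Icc 0 T := ⟨hδ.trans hδT, le_rfl⟩
  have hTδ : T - δ ∈ Icc 0 T := ⟨by linarith, by linarith⟩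
  have hshift : IntervalIntegrable (fun x => h (x + δ)) volume 0 (T - δ) := by
    simpa using (hint.mono_Icc ⟨hδ, hδT⟩ hT).comp_add_right δ
  rw [integral_sub hshift (hint.mono_Icc h0 hTδ), integral_comp_add_right, zero_add,
    sub_add_cancel, integral_interval_sub_interval_comm (hint.mono_Icc ⟨hδ, hδT⟩ hT)
      (hint.mono_Icc h0 hTδ) (hint.mono_Icc ⟨hδ, hδT⟩ h0), integral_symm 0 δ,
    integral_symm (T - δ) T]
  ring

theorem two_mul_abs_integral_mul_le_of_antiperiodic (hint : IntervalIntegrable h volume 0 T)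
    (hK : Continuous K) (hK1 : ∀ x, |K x| ≤ 1) (hKδ : Antiperiodic K δ) (hδ : 0 ≤ δ)
    (hδT : δ ≤ T) :
    2 * |∫ x in 0..T, h x * K x| ≤ (∫ x in 0..T - δ, |h x - h (x + δ)|)
      + (∫ x in T - δ..T, |h x|) + ∫ x in 0..δ, |h x| := by
  have hhK : IntervalIntegrable (fun x => h x * K x) volume 0 T :=
    hint.mul_continuousOn hK.continuousOn
  have h0 : 0 ∈ Icc 0 T := ⟨le_rfl, hδ.trans hδT⟩
  have hT : T ∈ Icc 0 T := ⟨hδ.trans hδT, le_rfl⟩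
  have hTδ : T - δ ∈ Icc 0 T := ⟨by linarith, by linarith⟩
  have hδ' : δ ∈ Icc 0 T := ⟨hδ, hδT⟩
  have hshift : IntervalIntegrable (fun x => h (x + δ)) volume 0 (T - δ) := by
    simpa using (hint.mono_Icc hδ' hT).comp_add_right δ
  -- split at `T - δ`, and at `δ` followed by `x ↦ x + δ`: by antiperiodicity the sum of the
  -- two expressions only involves the increments `h x - h (x + δ)` and two end pieces
  have hsplit_left : ∫ x in 0..T, h x * K x
      = (∫ x in 0..T - δ, h x * K x) + ∫ x in T - δ..T, h x * K x :=
    (integral_add_adjacent_intervals (hhK.mono_Icc h0 hTδ) (hhK.mono_Icc hTδ hT)).symm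
  have hsplit_right : ∫ x in 0..T, h x * K x
      = (∫ x in 0..δ, h x * K x) - ∫ x in 0..T - δ, h (x + δ) * K x := by
    have hshiftK : ∫ x in δ..T, h x * K x = -∫ x in 0..T - δ, h (x + δ) * K x := by
      rw [← integral_neg]
      simpa [hKδ _] using
        (integral_comp_add_right (fun x => h x * K x) δ (a := 0) (b := T - δ)).symm
    rw [← integral_add_adjacent_intervals (hhK.mono_Icc h0 hδ') (hhK.mono_Icc hδ' hT), hshiftK]
    ring
  have hdiff : ∫ x in 0..T - δ, (h x - h (x + δ)) * K x
      = (∫ x in 0..T - δ, h x * K x) - ∫ x in 0..T - δ, h (x + δ) * K x := by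
    simp_rw [sub_mul]
    exact integral_sub (hhK.mono_Icc h0 hTδ) (hshift.mul_continuousOn hK.continuousOn)
  calc 2 * |∫ x in 0..T, h x * K x| = |2 * ∫ x in 0..T, h x * K x| := by
        rw [abs_mul, abs_two]
    _ = |(∫ x in 0..T - δ, (h x - h (x + δ)) * K x) + (∫ x in T - δ..T, h x * K x)
          + ∫ x in 0..δ, h x * K x| := by
        rw [hdiff]
        congr 1
        linarith
    _ ≤ _ := (abs_add_three _ _ _).trans <| add_le_add_three
        (abs_integral_mul_le_integral_abs hTδ.1 ((hint.mono_Icc h0 hTδ).sub hshift) hK hK1)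
        (abs_integral_mul_le_integral_abs (by linarith) (hint.mono_Icc hTδ hT) hK hK1)
        (abs_integral_mul_le_integral_abs hδ (hint.mono_Icc h0 hδ') hK hK1)

theorem abs_integral_mul_le_of_monotoneOn (hint : IntervalIntegrable h volume 0 T)
    (hK : Continuous K) (hK1 : ∀ x, |K x| ≤ 1) (hKδ : Antiperiodic K δ) (hδ : 0 ≤ δ)
    (hδT : δ ≤ T) (hmono : MonotoneOn h (Ioo 0 T)) (hnonneg : ∀ x ∈ Ioo 0 T, 0 ≤ h x) :
    |∫ x in 0..T, h x * K x| ≤ ∫ x in T - δ..T, h x := by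
  have hvar : ∫ x in 0..T - δ, |h x - h (x + δ)| = ∫ x in 0..T - δ, (h (x + δ) - h x) :=
    integral_congr_Ioo_of_le (by linarith) fun x hx => by
      have hx' : x ∈ Ioo 0 T := ⟨hx.1, by linarith [hx.2]⟩
      have hxδ : x + δ ∈ Ioo 0 T := ⟨by linarith [hx.1], by linarith [hx.2]⟩
      rw [abs_sub_comm, abs_of_nonneg (sub_nonneg.2 (hmono hx' hxδ (by linarith)))]
  have habs : ∀ a b, 0 ≤ a → a ≤ b → b ≤ T → ∫ x in a..b, |h x| = ∫ x in a..b, h x :=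
    fun a b ha hab hb => integral_congr_Ioo_of_le hab fun x hx =>
      abs_of_nonneg (hnonneg x ⟨by linarith [hx.1], by linarith [hx.2]⟩)
  have key := two_mul_abs_integral_mul_le_of_antiperiodic hint hK hK1 hKδ hδ hδT
  rw [hvar, habs _ _ (by linarith) (by linarith) le_rfl, habs _ _ le_rfl hδ hδT,
    integral_comp_add_right_sub_eq hint hδ hδT] at key
  linarith

theorem abs_integral_mul_le_of_abs_sub_le {u : ℝ → ℝ} {M : ℝ}
    (hint : IntervalIntegrable h volume 0 T) (huint : IntervalIntegrable u volume 0 T)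
    (hh : ∀ x ∈ Icc 0 T, |h x| ≤ M) (hu : ∀ x ∈ Icc 0 T, |u x| ≤ M)
    (hinc : ∀ x ∈ Icc 0 (T - δ), |h x - h (x + δ)| ≤ u (x + δ) - u x)
    (hK : Continuous K) (hK1 : ∀ x, |K x| ≤ 1) (hKδ : Antiperiodic K δ) (hδ : 0 ≤ δ)
    (hδT : δ ≤ T) :
    |∫ x in 0..T, h x * K x| ≤ 2 * M * δ := by
  have h0 : 0 ∈ Icc 0 T := ⟨le_rfl, hδ.trans hδT⟩
  have hTδ : T - δ ∈ Icc 0 T := ⟨by linarith, by linarith⟩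
  have hshift : ∀ {f : ℝ → ℝ}, IntervalIntegrable f volume 0 T →
      IntervalIntegrable (fun x => f (x + δ)) volume 0 (T - δ) := fun hf => by
    simpa using (hf.mono_Icc ⟨hδ, hδT⟩ ⟨hδ.trans hδT, le_rfl⟩).comp_add_right δ
  have hbound : ∀ {f : ℝ → ℝ} {a b : ℝ}, 0 ≤ a → a ≤ b → b ≤ T →
      (∀ x ∈ Icc 0 T, |f x| ≤ M) → |∫ x in a..b, f x| ≤ M * (b - a) := fun ha hab hb hf => by
    rw [← Real.norm_eq_abs, ← abs_of_nonneg (sub_nonneg.2 hab)]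
    refine norm_integral_le_of_norm_le_const fun x hx => ?_
    rw [uIoc_of_le hab] at hx
    exact hf x ⟨by linarith [hx.1], by linarith [hx.2]⟩
  have hvar : ∫ x in 0..T - δ, |h x - h (x + δ)| ≤ ∫ x in 0..T - δ, (u (x + δ) - u x) :=
    integral_mono_on hTδ.1 ((hint.mono_Icc h0 hTδ).sub (hshift hint)).abs
      ((hshift huint).sub (huint.mono_Icc h0 hTδ)) hinc
  rw [integral_comp_add_right_sub_eq huint hδ hδT] at hvar
  have hh' : ∀ x ∈ Icc 0 T, |(fun x => |h x|) x| ≤ M := by simpa using hh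
  have h1 := hbound (a := T - δ) (by linarith) (by linarith) le_rfl hu
  have h2 := hbound (a := 0) le_rfl hδ hδT hu
  have h3 := hbound (a := T - δ) (by linarith) (by linarith) le_rfl hh'
  have h4 := hbound (a := 0) le_rfl hδ hδT hh'
  have key := two_mul_abs_integral_mul_le_of_antiperiodic hint hK hK1 hKδ hδ hδT
  simp only [abs_le] at h1 h2 h3 h4
  linarith

theorem abs_integral_mul_le_of_monotoneOn_of_antitoneOn {φ ψ : ℝ → ℝ} {M : ℝ}
    (hφc : ContinuousOn φ (Icc 0 T)) (hψc : ContinuousOn ψ (Icc 0 T))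
    (hφ : MonotoneOn φ (Icc 0 T)) (hψ : AntitoneOn ψ (Icc 0 T))
    (hφb : ∀ x ∈ Icc 0 T, φ x ∈ Icc 0 M) (hψb : ∀ x ∈ Icc 0 T, ψ x ∈ Icc 0 1)
    (hK : Continuous K) (hK1 : ∀ x, |K x| ≤ 1) (hKδ : Antiperiodic K δ) (hδ : 0 ≤ δ)
    (hδT : δ ≤ T) :
    |∫ x in 0..T, φ x * ψ x * K x| ≤ 2 * M * δ := by
  have hint : ∀ {f : ℝ → ℝ}, ContinuousOn f (Icc 0 T) → IntervalIntegrable f volume 0 T :=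
    fun hf => (uIcc_of_le (hδ.trans hδT) ▸ hf).intervalIntegrable
  refine abs_integral_mul_le_of_abs_sub_le (u := fun x => φ x - M * ψ x) (hint (hφc.mul hψc))
    (hint (hφc.sub (continuousOn_const.mul hψc))) (fun x hx => ?_) (fun x hx => ?_)
    (fun x hx => ?_) hK hK1 hKδ hδ hδT
  · obtain ⟨⟨h1, h2⟩, ⟨h3, h4⟩⟩ := And.intro (hφb x hx) (hψb x hx)
    rw [abs_of_nonneg (mul_nonneg h1 h3)]
    nlinarith
  · obtain ⟨⟨h1, h2⟩, ⟨h3, h4⟩⟩ := And.intro (hφb x hx) (hψb x hx)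
    exact abs_le.2 ⟨by nlinarith, by nlinarith⟩
  · have hx0 : x ∈ Icc 0 T := ⟨hx.1, by linarith [hx.2]⟩
    have hxδ : x + δ ∈ Icc 0 T := ⟨by linarith [hx.1], by linarith [hx.2]⟩
    exact abs_mul_sub_mul_le_of_monotone_antitone (hφb x hx0).1 (hφ hx0 hxδ (by linarith))
      (hφb _ hxδ).2 (hψb _ hxδ).1 (hψ hx0 hxδ (by linarith)) (hψb x hx0).2

end AntiperiodicKernel

theorem integral_mul_cos_eq_inv_mul_integral_mul_sin {f h : ℝ → ℝ} {T ω : ℝ} (hT : 0 ≤ T)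
    (hω : ω ≠ 0) (hf : ContinuousOn f (Icc 0 T)) (hderiv : ∀ x ∈ Ioo 0 T, HasDerivAt f (-h x) x)
    (hint : IntervalIntegrable h volume 0 T) (hfT : f T = 0) :
    ∫ x in 0..T, f x * cos (ω * x) = ω⁻¹ * ∫ x in 0..T, h x * sin (ω * x) := by
  have hsin : ∀ x, HasDerivAt (fun x => sin (ω * x) / ω) (cos (ω * x)) x := fun x => by
    simpa [hω] using ((hasDerivAt_id x).const_mul ω).sin.div_const ω
  rw [integral_mul_deriv_eq_deriv_mul_of_hasDerivAt (uIcc_of_le hT ▸ hf)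
    (by fun_prop) (by simpa [hT] using hderiv) (fun x _ => hsin x) hint.neg
    (by apply Continuous.intervalIntegrable; fun_prop), hfT, ← integral_const_mul]
  simp only [mul_zero, sin_zero, zero_div, zero_mul, sub_zero, zero_sub, ← integral_neg]
  refine integral_congr fun x _ => ?_
  simp only [Pi.neg_apply]
  field_simp

theorem integral_zero_one_eq_of_comp_one_sub {F : ℝ → ℝ} {c : ℝ}
    (hF : ∀ x, F (1 - x) = c * F x) (hint : IntervalIntegrable F volume 0 (1 / 2)) :
    ∫ x in 0..1, F x = (1 + c) * ∫ x in 0..1 / 2, F x := by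
  have hF' : F = fun x => c * F (1 - x) := funext fun x => by simpa using hF (1 - x)
  have hint' : IntervalIntegrable F volume (1 / 2) 1 := by
    have := (hint.comp_sub_left 1).symm.const_mul c
    rw [hF']
    norm_num at this ⊢
    exact this
  rw [← integral_add_adjacent_intervals hint hint', add_mul, one_mul]
  congr 1
  conv_lhs => rw [hF']
  rw [integral_const_mul, integral_comp_sub_left]
  norm_num

theorem deriv_const_sub_eq_neg_of_forall {f : ℝ → ℝ} {a : ℝ} (hf : ∀ y, f (a - y) = f y)
    (z : ℝ) : deriv f (a - z) = -deriv f z := by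
  have h := deriv_comp_const_sub (f := f) (a := a) (x := z)
  simp only [hf] at h
  linarith

theorem integral_comp_mul_left_mul_cos {g : ℝ → ℝ} {L ω b : ℝ} (hL : L ≠ 0) :
    ∫ x in 0..b, g (L * x) * cos (ω * x) = L⁻¹ * ∫ y in 0..L * b, g y * cos (ω / L * y) := by
  have h := integral_comp_mul_left (fun y => g y * cos (ω / L * y)) hL (a := 0) (b := b)
  rw [smul_eq_mul, mul_zero] at h
  rw [← h]
  refine integral_congr fun x _ => ?_
  field_simp

section Fp

variable {p : ℝ}

theorem one_sub_rpow_pos {t : ℝ} (hp : 0 < p) (ht : t ∈ Ico 0 1) : 0 < 1 - t ^ p := by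
  linarith [rpow_lt_one ht.1 ht.2 hp]

theorem one_sub_rpow_mem_Icc {u : ℝ} (hp : 0 ≤ p) (hu : u ∈ Icc 0 1) : 1 - u ^ p ∈ Icc 0 1 :=
  ⟨by linarith [rpow_le_one hu.1 hu.2 hp], by linarith [rpow_nonneg hu.1 p]⟩

theorem intervalIntegrable_Fp_integrand (hp : 1 < p) :
    IntervalIntegrable (fun t => (1 - t ^ p) ^ (-(1 / p))) volume 0 1 := by
  have hmaj : IntervalIntegrable (fun t : ℝ => (1 - t) ^ (-(1 / p))) volume 0 1 := by
    have := (intervalIntegrable_rpow' (r := -(1 / p)) (a := 0) (b := 1)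
      (by rw [neg_lt_neg_iff, div_lt_one (by linarith)]; exact hp)).comp_sub_left 1
    simpa using this.symm
  refine hmaj.mono_fun (Measurable.aestronglyMeasurable (by fun_prop))
    (MeasureTheory.ae_restrict_of_forall_mem measurableSet_uIoc fun t ht => ?_)
  rw [uIoc_of_le zero_le_one] at ht
  simp only [norm_eq_abs]
  rcases ht.2.eq_or_lt with rfl | ht1
  · simp
  have hlt : 0 < 1 - t := by linarith
  have hle : 1 - t ≤ 1 - t ^ p := by
    have := rpow_le_rpow_of_exponent_ge ht.1 ht1.le hp.le
    rw [rpow_one] at this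
    linarith
  rw [abs_of_pos (rpow_pos_of_pos (hlt.trans_le hle) _), abs_of_pos (rpow_pos_of_pos hlt _)]
  exact rpow_le_rpow_of_nonpos hlt hle (by linarith [one_div_pos.2 (by linarith : 0 < p)])

theorem Fp_sub_Fp (hp : 1 < p) {x y : ℝ} (hx : x ∈ Icc 0 1) (hy : y ∈ Icc 0 1) :
    Fp p y - Fp p x = ∫ t in x..y, (1 - t ^ p) ^ (-(1 / p)) :=
  integral_interval_sub_left ((intervalIntegrable_Fp_integrand hp).mono_Icc (by simp) hy)
    ((intervalIntegrable_Fp_integrand hp).mono_Icc (by simp) hx)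

theorem strictMonoOn_Fp_s16 (hp : 1 < p) : StrictMonoOn (Fp p) (Icc 0 1) := fun x hx y hy hxy => by
  rw [← sub_pos, Fp_sub_Fp hp hx hy]
  refine intervalIntegral_pos_of_pos_on ((intervalIntegrable_Fp_integrand hp).mono_Icc hx hy)
    (fun t ht => ?_) hxy
  exact rpow_pos_of_pos (one_sub_rpow_pos (by linarith)
    ⟨hx.1.trans ht.1.le, ht.2.trans_le hy.2⟩) _

theorem Fp_one_pos_s16 (hp : 1 < p) : 0 < Fp p 1 := by
  simpa [Fp] using strictMonoOn_Fp_s16 hp (left_mem_Icc.2 zero_le_one) (right_mem_Icc.2 zero_le_one)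
    zero_lt_one

theorem continuousOn_Fp (hp : 1 < p) : ContinuousOn (Fp p) (Icc 0 1) := by
  have := continuousOn_primitive_interval
    ((intervalIntegrable_iff' (by simp)).1 (intervalIntegrable_Fp_integrand hp))
  rwa [uIcc_of_le zero_le_one] at this

theorem hasDerivAt_Fp (hp : 1 < p) {t : ℝ} (ht : t ∈ Ioo 0 1) :
    HasDerivAt (Fp p) ((1 - t ^ p) ^ (-(1 / p))) t := by
  have hcont : ContinuousOn (fun t : ℝ => (1 - t ^ p) ^ (-(1 / p))) (Ioo 0 1) := fun u hu =>
    ((continuousAt_const.sub (continuousAt_rpow_const _ _ (Or.inl hu.1.ne'))).rpow_const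
      (Or.inl (one_sub_rpow_pos (by linarith) ⟨hu.1.le, hu.2⟩).ne')).continuousWithinAt
  exact integral_hasDerivAt_right
    ((intervalIntegrable_Fp_integrand hp).mono_Icc (by simp) ⟨ht.1.le, ht.2.le⟩)
    (hcont.stronglyMeasurableAtFilter isOpen_Ioo _ ht) (hcont.continuousAt (Ioo_mem_nhds ht.1 ht.2))

theorem image_Fp (hp : 1 < p) : Fp p '' Icc 0 1 = Icc 0 (Fp p 1) := by
  have h0 : Fp p 0 = 0 := integral_same
  refine (MonotoneOn.image_Icc_subset (strictMonoOn_Fp_s16 hp).monotoneOn).trans_eq (by rw [h0])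
    |>.antisymm ?_
  simpa [h0] using intermediate_value_Icc zero_le_one (continuousOn_Fp hp)

theorem one_sub_rpow_rpow_le_mul_Fp_sub (hp : 1 < p) {u : ℝ} (hu : u ∈ Icc 0 1) :
    (1 - u ^ p) ^ ((p - 1) / p) ≤ p * (Fp p 1 - Fp p u) := by
  have hp0 : 0 < p := by linarith
  rcases hu.2.eq_or_lt with rfl | hu1
  · simp [zero_rpow (div_pos (sub_pos.2 hp) hp0).ne']
  set w := 1 - u ^ p
  have hw : 0 < w := one_sub_rpow_pos hp0 ⟨hu.1, hu1⟩
  have hbernoulli : w ≤ p * (1 - u) := by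
    have := one_add_mul_self_le_rpow_one_add (s := u - 1) (by linarith [hu.1]) hp.le
    rw [add_sub_cancel] at this
    linarith
  -- on `[u, 1)` the integrand of `Fp` is at least its value at `u`
  have hintegral : (1 - u) * w ^ (-(1 / p)) ≤ Fp p 1 - Fp p u := by
    rw [Fp_sub_Fp hp hu ⟨zero_le_one, le_rfl⟩]
    calc (1 - u) * w ^ (-(1 / p)) = ∫ _ in u..1, w ^ (-(1 / p)) := by simp
      _ ≤ _ := integral_mono_on_of_le_Ioo hu.2 intervalIntegrable_const
          ((intervalIntegrable_Fp_integrand hp).mono_Icc hu (by simp)) fun t ht =>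
          rpow_le_rpow_of_nonpos (one_sub_rpow_pos hp0 ⟨hu.1.trans ht.1.le, ht.2⟩)
            (by linarith [rpow_le_rpow hu.1 ht.1.le hp0.le])
            (by linarith [one_div_pos.2 hp0])
  calc w ^ ((p - 1) / p) = w ^ (1 + -(1 / p)) := by congr 1; field_simp; ring
    _ = w * w ^ (-(1 / p)) := by rw [rpow_add hw, rpow_one]
    _ ≤ p * (1 - u) * w ^ (-(1 / p)) := by gcongr
    _ ≤ p * (Fp p 1 - Fp p u) := by rw [mul_assoc]; gcongr

end Fp

section Sinp

variable {p : ℝ} {s : ℝ → ℝ}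

theorem image_sinp (hp : 1 < p) (hs : InvOn s (Fp p) (Icc 0 1) (Icc 0 (Fp p 1))) :
    s '' Icc 0 (Fp p 1) = Icc 0 1 := by
  rw [← image_Fp hp, hs.1.image_image]

theorem sinp_mem_Icc (hp : 1 < p) (hs : InvOn s (Fp p) (Icc 0 1) (Icc 0 (Fp p 1))) {y : ℝ}
    (hy : y ∈ Icc 0 (Fp p 1)) : s y ∈ Icc 0 1 :=
  (image_sinp hp hs).subset (mem_image_of_mem s hy)

theorem strictMonoOn_sinp (hp : 1 < p) (hs : InvOn s (Fp p) (Icc 0 1) (Icc 0 (Fp p 1))) :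
    StrictMonoOn s (Icc 0 (Fp p 1)) := fun x hx y hy hxy => by
  by_contra hle
  have := (strictMonoOn_Fp_s16 hp).monotoneOn (sinp_mem_Icc hp hs hy) (sinp_mem_Icc hp hs hx)
    (not_lt.1 hle)
  rw [hs.2 hx, hs.2 hy] at this
  linarith

theorem sinp_zero (hs : InvOn s (Fp p) (Icc 0 1) (Icc 0 (Fp p 1))) : s 0 = 0 := by
  simpa [Fp] using hs.1 (left_mem_Icc.2 zero_le_one)

theorem sinp_Fp_one (hs : InvOn s (Fp p) (Icc 0 1) (Icc 0 (Fp p 1))) : s (Fp p 1) = 1 :=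
  hs.1 (right_mem_Icc.2 zero_le_one)

theorem sinp_mem_Ioo (hp : 1 < p) (hs : InvOn s (Fp p) (Icc 0 1) (Icc 0 (Fp p 1))) {y : ℝ}
    (hy : y ∈ Ioo 0 (Fp p 1)) : s y ∈ Ioo 0 1 := by
  have h := strictMonoOn_sinp hp hs
  have hc := (Fp_one_pos_s16 hp).le
  constructor
  · simpa [sinp_zero hs] using h ⟨le_rfl, hc⟩ (Ioo_subset_Icc_self hy) hy.1
  · simpa [sinp_Fp_one hs] using h (Ioo_subset_Icc_self hy) ⟨hc, le_rfl⟩ hy.2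

theorem continuousOn_sinp (hp : 1 < p) (hs : InvOn s (Fp p) (Icc 0 1) (Icc 0 (Fp p 1))) :
    ContinuousOn s (Icc 0 (Fp p 1)) :=
  (strictMonoOn_sinp hp hs).continuousOn_of_image_Icc (by
    rw [image_sinp hp hs, sinp_zero hs, sinp_Fp_one hs])

theorem hasDerivAt_sinp (hp : 1 < p) (hs : InvOn s (Fp p) (Icc 0 1) (Icc 0 (Fp p 1))) {y : ℝ}
    (hy : y ∈ Ioo 0 (Fp p 1)) : HasDerivAt s ((1 - s y ^ p) ^ (1 / p)) y := by
  have hsy := sinp_mem_Ioo hp hs hy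
  have hpos := one_sub_rpow_pos (by linarith) ⟨hsy.1.le, hsy.2⟩
  have hnhds : Icc 0 (Fp p 1) ∈ nhds y := Icc_mem_nhds hy.1 hy.2
  have := (hasDerivAt_Fp hp hsy).of_local_left_inverse
    ((continuousOn_sinp hp hs).continuousAt hnhds) (rpow_pos_of_pos hpos _).ne'
    (Filter.eventually_of_mem hnhds fun z hz => hs.2 hz)
  rwa [rpow_neg hpos.le, inv_inv] at this

theorem continuousOn_one_sub_sinp_rpow (hp : 1 < p)
    (hs : InvOn s (Fp p) (Icc 0 1) (Icc 0 (Fp p 1))) {q : ℝ} (hq : 0 ≤ q) :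
    ContinuousOn (fun y => (1 - s y ^ p) ^ q) (Icc 0 (Fp p 1)) :=
  (continuousOn_const.sub ((continuousOn_sinp hp hs).rpow_const fun _ _ => Or.inr
    (by linarith))).rpow_const fun _ _ => Or.inr hq

theorem hasDerivAt_one_sub_sinp_rpow (hp : 1 < p)
    (hs : InvOn s (Fp p) (Icc 0 1) (Icc 0 (Fp p 1))) {y : ℝ} (hy : y ∈ Ioo 0 (Fp p 1)) :
    HasDerivAt (fun y => (1 - s y ^ p) ^ (1 / p))
      (-(s y ^ (p - 1) * (1 - s y ^ p) ^ (2 / p - 1))) y := by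
  have hsy := sinp_mem_Ioo hp hs hy
  have hw := one_sub_rpow_pos (by linarith) ⟨hsy.1.le, hsy.2⟩
  convert (((hasDerivAt_sinp hp hs hy).rpow_const (Or.inr hp.le)).const_sub 1).rpow_const
    (p := 1 / p) (Or.inl hw.ne') using 1
  rw [show 2 / p - 1 = 1 / p + (1 / p - 1) by ring, rpow_add hw]
  field_simp

theorem sinp_rpow_mul_one_sub_rpow_nonneg (hp : 1 < p)
    (hs : InvOn s (Fp p) (Icc 0 1) (Icc 0 (Fp p 1))) {y : ℝ} (hy : y ∈ Icc 0 (Fp p 1)) :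
    0 ≤ s y ^ (p - 1) * (1 - s y ^ p) ^ (2 / p - 1) :=
  mul_nonneg (rpow_nonneg (sinp_mem_Icc hp hs hy).1 _)
    (rpow_nonneg (one_sub_rpow_mem_Icc (by linarith) (sinp_mem_Icc hp hs hy)).1 _)

theorem intervalIntegrable_sinp_rpow_mul_one_sub_rpow (hp : 1 < p)
    (hs : InvOn s (Fp p) (Icc 0 1) (Icc 0 (Fp p 1))) :
    IntervalIntegrable (fun y => s y ^ (p - 1) * (1 - s y ^ p) ^ (2 / p - 1))
      volume 0 (Fp p 1) := by
  have hc := (Fp_one_pos_s16 hp).le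
  refine intervalIntegrable_deriv_of_nonneg (g := fun y => -(1 - s y ^ p) ^ (1 / p))
    (uIcc_of_le hc ▸ (continuousOn_one_sub_sinp_rpow hp hs (by positivity)).neg) ?_ ?_
  · simpa [hc] using fun y hy =>
      (hasDerivAt_one_sub_sinp_rpow hp hs hy).fun_neg.congr_deriv (neg_neg _)
  · simpa [hc] using fun y hy =>
      sinp_rpow_mul_one_sub_rpow_nonneg hp hs (Ioo_subset_Icc_self hy)

theorem integral_sinp_rpow_mul_one_sub_rpow (hp : 1 < p)
    (hs : InvOn s (Fp p) (Icc 0 1) (Icc 0 (Fp p 1))) {a b : ℝ} (ha : 0 ≤ a) (hab : a ≤ b)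
    (hb : b ≤ Fp p 1) :
    ∫ y in a..b, s y ^ (p - 1) * (1 - s y ^ p) ^ (2 / p - 1)
      = (1 - s a ^ p) ^ (1 / p) - (1 - s b ^ p) ^ (1 / p) := by
  rw [integral_eq_sub_of_hasDerivAt_of_le hab
    ((continuousOn_one_sub_sinp_rpow hp hs (by positivity)).neg.mono (Icc_subset_Icc ha hb))
    (fun y hy => (hasDerivAt_one_sub_sinp_rpow hp hs
      ⟨ha.trans_lt hy.1, hy.2.trans_le hb⟩).fun_neg.congr_deriv (neg_neg _))
    ((intervalIntegrable_sinp_rpow_mul_one_sub_rpow hp hs).mono_Icc ⟨ha, hab.trans hb⟩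
      ⟨ha.trans hab, hb⟩)]
  simp only [Pi.neg_apply]
  ring

theorem abs_integral_sinp_mul_antiperiodic_le_of_lt_two (hp : 1 < p) (hp2 : p < 2)
    (hs : InvOn s (Fp p) (Icc 0 1) (Icc 0 (Fp p 1))) {δ : ℝ} (hδ : δ ∈ Ioc 0 (Fp p 1))
    {K : ℝ → ℝ} (hK : Continuous K) (hK1 : ∀ x, |K x| ≤ 1) (hKδ : Antiperiodic K δ) :
    |∫ y in 0..Fp p 1, s y ^ (p - 1) * (1 - s y ^ p) ^ (2 / p - 1) * K y| ≤ 2 * δ := by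
  have hmem := fun {y} (hy : y ∈ Icc 0 (Fp p 1)) => sinp_mem_Icc hp hs hy
  have hw := fun {y} (hy : y ∈ Icc 0 (Fp p 1)) => one_sub_rpow_mem_Icc (by linarith) (hmem hy)
  have hmono := (strictMonoOn_sinp hp hs).monotoneOn
  have hq : 0 ≤ 2 / p - 1 := by rw [sub_nonneg, le_div_iff₀ (by linarith)]; linarith
  simpa using abs_integral_mul_le_of_monotoneOn_of_antitoneOn (M := 1)
    ((continuousOn_sinp hp hs).rpow_const fun _ _ => Or.inr (by linarith))
    (continuousOn_one_sub_sinp_rpow hp hs hq)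
    (fun x hx y hy hxy => rpow_le_rpow (hmem hx).1 (hmono hx hy hxy) (by linarith))
    (fun x hx y hy hxy => rpow_le_rpow (hw hy).1
      (by linarith [rpow_le_rpow (hmem hx).1 (hmono hx hy hxy) (by linarith : 0 ≤ p)]) hq)
    (fun y hy => ⟨rpow_nonneg (hmem hy).1 _, rpow_le_one (hmem hy).1 (hmem hy).2 (by linarith)⟩)
    (fun y hy => ⟨rpow_nonneg (hw hy).1 _, rpow_le_one (hw hy).1 (hw hy).2 hq⟩)
    hK hK1 hKδ hδ.1.le hδ.2

theorem abs_integral_sinp_mul_antiperiodic_le_of_two_le (hp2 : 2 ≤ p)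
    (hs : InvOn s (Fp p) (Icc 0 1) (Icc 0 (Fp p 1))) {δ : ℝ} (hδ : δ ∈ Ioc 0 (Fp p 1))
    {K : ℝ → ℝ} (hK : Continuous K) (hK1 : ∀ x, |K x| ≤ 1) (hKδ : Antiperiodic K δ) :
    |∫ y in 0..Fp p 1, s y ^ (p - 1) * (1 - s y ^ p) ^ (2 / p - 1) * K y|
      ≤ (p * δ) ^ (1 / (p - 1)) := by
  have hp : 1 < p := by linarith
  have hIoo := fun {y} (hy : y ∈ Ioo 0 (Fp p 1)) => sinp_mem_Ioo hp hs hy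
  have hw := fun {y} (hy : y ∈ Ioo 0 (Fp p 1)) =>
    one_sub_rpow_pos (by linarith) ⟨(hIoo hy).1.le, (hIoo hy).2⟩
  have hmono : MonotoneOn s (Ioo 0 (Fp p 1)) :=
    (strictMonoOn_sinp hp hs).monotoneOn.mono Ioo_subset_Icc_self
  have hq : 2 / p - 1 ≤ 0 := by rw [sub_nonpos, div_le_one (by linarith)]; exact hp2
  have hhmono : MonotoneOn (fun y => s y ^ (p - 1) * (1 - s y ^ p) ^ (2 / p - 1))
      (Ioo 0 (Fp p 1)) :=
    MonotoneOn.mul (fun x hx y hy hxy => rpow_le_rpow (hIoo hx).1.le (hmono hx hy hxy)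
        (by linarith))
      (fun x hx y hy hxy => rpow_le_rpow_of_nonpos (hw hy)
        (by linarith [rpow_le_rpow (hIoo hx).1.le (hmono hx hy hxy) (by linarith : 0 ≤ p)]) hq)
      (fun y hy => rpow_nonneg (hIoo hy).1.le _) (fun y hy => rpow_nonneg (hw hy).le _)
  have hcδ : Fp p 1 - δ ∈ Icc 0 (Fp p 1) := ⟨by linarith [hδ.2], by linarith [hδ.1]⟩
  refine (abs_integral_mul_le_of_monotoneOn (intervalIntegrable_sinp_rpow_mul_one_sub_rpow hp hs)
    hK hK1 hKδ hδ.1.le hδ.2 hhmono fun y hy =>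
      sinp_rpow_mul_one_sub_rpow_nonneg hp hs (Ioo_subset_Icc_self hy)).trans ?_
  rw [integral_sinp_rpow_mul_one_sub_rpow hp hs hcδ.1 hcδ.2 le_rfl, sinp_Fp_one hs]
  have key := one_sub_rpow_rpow_le_mul_Fp_sub hp (sinp_mem_Icc hp hs hcδ)
  rw [hs.2 hcδ, sub_sub_cancel] at key
  have hwδ := one_sub_rpow_mem_Icc (by linarith : (0 : ℝ) ≤ p) (sinp_mem_Icc hp hs hcδ)
  have hp1 : 0 < p - 1 := by linarith
  calc (1 - s (Fp p 1 - δ) ^ p) ^ (1 / p) - (1 - 1 ^ p) ^ (1 / p)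
      = ((1 - s (Fp p 1 - δ) ^ p) ^ ((p - 1) / p)) ^ (1 / (p - 1)) := by
        rw [one_rpow, sub_self, zero_rpow (by positivity), sub_zero, ← rpow_mul hwδ.1]
        congr 1
        field_simp
    _ ≤ (p * δ) ^ (1 / (p - 1)) := rpow_le_rpow (rpow_nonneg hwδ.1 _) key (by positivity)

theorem exists_abs_integral_sinp_mul_antiperiodic_le (hp : 1 < p)
    (hs : InvOn s (Fp p) (Icc 0 1) (Icc 0 (Fp p 1))) :
    ∃ C ε : ℝ, 0 < ε ∧ ∀ δ ∈ Ioc 0 (Fp p 1), ∀ K : ℝ → ℝ, Continuous K → (∀ x, |K x| ≤ 1) →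
      Antiperiodic K δ →
        |∫ y in 0..Fp p 1, s y ^ (p - 1) * (1 - s y ^ p) ^ (2 / p - 1) * K y| ≤ C * δ ^ ε := by
  rcases lt_or_ge p 2 with hp2 | hp2
  · refine ⟨2, 1, one_pos, fun δ hδ K hK hK1 hKδ => ?_⟩
    simpa using abs_integral_sinp_mul_antiperiodic_le_of_lt_two hp hp2 hs hδ hK hK1 hKδ
  · have hp1 : 0 < p - 1 := by linarith
    refine ⟨p ^ (1 / (p - 1)), 1 / (p - 1), by positivity, fun δ hδ K hK hK1 hKδ => ?_⟩
    rw [← mul_rpow (by linarith) hδ.1.le]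
    exact abs_integral_sinp_mul_antiperiodic_le_of_two_le hp2 hs hδ hK hK1 hKδ

theorem integral_deriv_sinp_mul_cos_eq (hp : 1 < p)
    (hs : InvOn s (Fp p) (Icc 0 1) (Icc 0 (Fp p 1)))
    (hrefl : ∀ y, s (2 * Fp p 1 - y) = s y) {j : ℕ} (hj : j ≠ 0) :
    ∫ x in 0..1, deriv s (2 * Fp p 1 * x) * cos (j * π * x)
      = (1 - (-1) ^ j) * (j * π)⁻¹ * ∫ y in 0..Fp p 1,
          s y ^ (p - 1) * (1 - s y ^ p) ^ (2 / p - 1) * sin (j * π / (2 * Fp p 1) * y) := by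
  set c := Fp p 1
  have hc : 0 < c := Fp_one_pos_s16 hp
  have hfc : ContinuousOn (fun y => (1 - s y ^ p) ^ (1 / p)) (Icc 0 c) :=
    continuousOn_one_sub_sinp_rpow hp hs (by positivity)
  have hFc : ContinuousOn (fun x => (1 - s (2 * c * x) ^ p) ^ (1 / p) * cos (j * π * x))
      (Icc 0 (1 / 2)) :=
    (hfc.comp (continuous_const_mul _).continuousOn fun x hx =>
      ⟨by nlinarith [hx.1], by nlinarith [hx.2]⟩).mul (by fun_prop)
  have hF : EqOn (fun x => (1 - s (2 * c * x) ^ p) ^ (1 / p) * cos (j * π * x))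
      (fun x => deriv s (2 * c * x) * cos (j * π * x)) (Ioo 0 (1 / 2)) := fun x hx => by
    dsimp only
    rw [(hasDerivAt_sinp hp hs ⟨by nlinarith [hx.1], by nlinarith [hx.2]⟩).deriv]
  rw [integral_zero_one_eq_of_comp_one_sub (c := -(-1) ^ j) (fun x => by
      rw [show 2 * c * (1 - x) = 2 * c - 2 * c * x by ring,
        deriv_const_sub_eq_neg_of_forall hrefl,
        show j * π * (1 - x) = j * π - j * π * x by ring, cos_nat_mul_pi_sub]
      ring)
    (hFc.intervalIntegrable_of_Icc (by norm_num) |>.congr_uIoo (by simpa using hF)),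
    ← integral_congr_Ioo_of_le (by norm_num) hF,
    integral_comp_mul_left_mul_cos (g := fun y => (1 - s y ^ p) ^ (1 / p)) (by positivity),
    show 2 * c * (1 / 2) = c by ring,
    integral_mul_cos_eq_inv_mul_integral_mul_sin hc.le (by positivity) hfc
      (fun y hy => hasDerivAt_one_sub_sinp_rpow hp hs hy)
      (intervalIntegrable_sinp_rpow_mul_one_sub_rpow hp hs)
      (by rw [sinp_Fp_one hs, one_rpow, sub_self, zero_rpow (by positivity)])]
  field_simp
  ring

theorem exists_abs_fourier_coeff_sinp_le (hp : 1 < p)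
    (hs : InvOn s (Fp p) (Icc 0 1) (Icc 0 (Fp p 1)))
    (hrefl : ∀ y, s (2 * Fp p 1 - y) = s y) :
    ∃ C ε : ℝ, 0 < ε ∧ ∀ j : ℕ, 2 ≤ j →
      |2 * ∫ x in 0..1, deriv s (2 * Fp p 1 * x) * cos (j * π * x)|
        ≤ C * (j : ℝ) ^ (-(1 + ε)) := by
  obtain ⟨C, ε, hε, hdecay⟩ := exists_abs_integral_sinp_mul_antiperiodic_le hp hs
  set c := Fp p 1
  have hc : 0 < c := Fp_one_pos_s16 hp
  refine ⟨4 * C * (2 * c) ^ ε / π, ε, hε, fun j hj => ?_⟩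
  have hj0 : (0 : ℝ) < j := by positivity
  set ω := j * π / (2 * c)
  have hω : ω ≠ 0 := by positivity
  have hperiod : ω⁻¹ * π = 2 * c / j := by
    simp only [ω]
    field_simp
  have hδ : ω⁻¹ * π ∈ Ioc 0 c := by
    have hj2 : (2 : ℝ) ≤ j := by exact_mod_cast hj
    rw [hperiod]
    exact ⟨by positivity, by rw [div_le_iff₀ hj0]; nlinarith⟩
  have hI := hdecay _ hδ (fun y => sin (ω * y)) (by fun_prop) (fun y => abs_sin_le_one _)
    (sin_antiperiodic.const_mul hω)
  have hsign : |1 - (-1 : ℝ) ^ j| ≤ 2 := by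
    rcases neg_one_pow_eq_or ℝ j with h | h <;> norm_num [h]
  rw [integral_deriv_sinp_mul_cos_eq hp hs hrefl (by omega), abs_mul, abs_mul, abs_mul,
    abs_two, abs_inv, abs_of_pos (by positivity : (0 : ℝ) < j * π)]
  calc 2 * (|1 - (-1) ^ j| * (j * π)⁻¹ * |∫ y in 0..c,
        s y ^ (p - 1) * (1 - s y ^ p) ^ (2 / p - 1) * sin (ω * y)|)
      ≤ 2 * (2 * (j * π)⁻¹ * (C * (ω⁻¹ * π) ^ ε)) := by gcongr
    _ = 4 * C * (2 * c) ^ ε / π * (j : ℝ) ^ (-(1 + ε)) := by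
      rw [hperiod, div_rpow (by positivity) hj0.le, rpow_neg hj0.le, rpow_add hj0, rpow_one]
      field_simp
      ring

end Sinp

theorem fourier_coeff_summable_general (p : ℝ) (hp : 1 < p) (s : ℝ → ℝ)
    (hinv₁ : ∀ y ∈ Icc (0:ℝ) 1, s (Fp p y) = y)
    (hinv₂ : ∀ x ∈ Icc (0:ℝ) (pip p / 2), Fp p (s x) = x)
    (hsym : ∀ x, s (pip p / 2 - x) = s (pip p / 2 + x)) :
    Summable (fun j : ℕ =>
      |2 * ∫ x in (0:ℝ)..1, deriv s (pip p * x) * Real.cos (j * π * x)|) := by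
  have hpip : pip p = 2 * Fp p 1 := rfl
  rw [hpip] at hinv₂ hsym ⊢
  rw [mul_div_cancel_left₀ _ two_ne_zero] at hinv₂ hsym
  have hrefl : ∀ y, s (2 * Fp p 1 - y) = s y := fun y => by
    rw [show 2 * Fp p 1 - y = Fp p 1 - (y - Fp p 1) by ring, hsym, add_sub_cancel]
  obtain ⟨C, ε, hε, hbound⟩ := exists_abs_fourier_coeff_sinp_le hp ⟨hinv₁, hinv₂⟩ hrefl
  refine .of_norm_bounded_eventually_nat
    ((summable_nat_rpow.2 (by linarith : -(1 + ε) < -1)).mul_left C) ?_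
  filter_upwards [Filter.eventually_ge_atTop 2] with j hj
  simpa using hbound j hj

theorem fourier_coeff_summable (p : ℝ) (hp : 1 < p) (s : ℝ → ℝ)
    (hinv₁ : ∀ y ∈ Icc (0:ℝ) 1, s (Fp p y) = y)
    (hinv₂ : ∀ x ∈ Icc (0:ℝ) (pip p / 2), Fp p (s x) = x)
    (hodd : ∀ x, s (-x) = -s x)
    (hsym : ∀ x, s (pip p / 2 - x) = s (pip p / 2 + x)) :
    Summable (fun j : ℕ =>
      |2 * ∫ x in (0:ℝ)..1, deriv s (pip p * x) * Real.cos (j * π * x)|) :=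
  fourier_coeff_summable_general p hp s hinv₁ hinv₂ hsym
end

section
/- ζ(3/2) < (2/√π)·(2√2 arctan(1/√2) + π²/6 + t₀²/4 − (t₀−1)²/(2(e−1)²) − (t₀(e−2)+1)/(e−1)), where t₀ = 2(e²−3e+1)/(e²−2e−1). -/
/-!
Writing `ζ(3/2) = ∑ n^{-3/2}` and comparing each term with `n ≥ 3` with the integral of
`t^{-3/2}` over `[n - 1, n]` gives `ζ(3/2) ≤ 1 + 2^{-3/2} + 2/√2 = 1 + 5√2/4 < 2.768`.
On the other side, `arctan x ≥ x - x³/3` gives `2√2 arctan(1/√2) ≥ 5/3`, and the terms in `e`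
add up to more than `-4/5`, so the right-hand side exceeds `(2/√π)(5/3 + π²/6 - 4/5) > 2.8`.
-/

open Real Finset

lemma sub_pow_three_div_three_le_arctan {x : ℝ} (hx : 0 ≤ x) : x - x ^ 3 / 3 ≤ arctan x := by
  have hderiv (t : ℝ) : HasDerivAt (fun t ↦ arctan t - (t - t ^ 3 / 3))
      (1 / (1 + t ^ 2) - (1 - t ^ 2)) t :=
    ((hasDerivAt_arctan t).sub ((hasDerivAt_id' t).sub
      ((hasDerivAt_pow 3 t).div_const 3))).congr_deriv (by norm_num)
  have hmono : MonotoneOn (fun t ↦ arctan t - (t - t ^ 3 / 3)) (Set.Ici 0) := by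
    refine monotoneOn_of_deriv_nonneg (convex_Ici 0)
      (fun t _ ↦ (hderiv t).continuousAt.continuousWithinAt)
      (fun t _ ↦ (hderiv t).differentiableAt.differentiableWithinAt) fun t _ ↦ ?_
    rw [(hderiv t).deriv, show 1 / (1 + t ^ 2) - (1 - t ^ 2) = t ^ 4 / (1 + t ^ 2) by
      field_simp; ring]
    positivity
  simpa using hmono Set.self_mem_Ici (Set.mem_Ici.2 hx) hx

lemma rpow_three_halves {x : ℝ} (hx : 0 ≤ x) : x ^ (3 / 2 : ℝ) = x * √x := by
  rcases hx.eq_or_lt with rfl | hx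
  · simp
  · rw [show (3 / 2 : ℝ) = 1 + 1 / 2 by norm_num, rpow_add hx, rpow_one, ← sqrt_eq_rpow]

lemma one_div_rpow_three_halves_le {x : ℝ} (hx : 1 < x) :
    1 / x ^ (3 / 2 : ℝ) ≤ 2 / √(x - 1) - 2 / √x := by
  have ha : 0 < √(x - 1) := sqrt_pos.2 (by linarith)
  have hb : 0 < √x := sqrt_pos.2 (by linarith)
  have ha2 : √(x - 1) ^ 2 = x - 1 := sq_sqrt (by linarith)
  have hb2 : √x ^ 2 = x := sq_sqrt (by linarith)
  have hab : √(x - 1) ≤ √x := sqrt_le_sqrt (by linarith)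
  rw [rpow_three_halves (by linarith), div_sub_div _ _ ha.ne' hb.ne',
    div_le_div_iff₀ (by positivity) (by positivity)]
  nlinarith [mul_pos ha hb, mul_le_mul_of_nonneg_right hab (mul_pos hb hb).le]

lemma tsum_one_div_nat_add_rpow_three_halves_le {k : ℕ} (hk : 1 < k) :
    ∑' i : ℕ, 1 / ((i + k : ℕ) : ℝ) ^ (3 / 2 : ℝ) ≤ 2 / √(k - 1) := by
  let g : ℕ → ℝ := fun i ↦ 2 / √(i + k - 1)
  refine tsum_le_of_sum_range_le (fun _ ↦ by positivity) fun m ↦ ?_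
  calc ∑ i ∈ range m, 1 / ((i + k : ℕ) : ℝ) ^ (3 / 2 : ℝ)
      ≤ ∑ i ∈ range m, (g i - g (i + 1)) := by
        refine sum_le_sum fun i _ ↦ ?_
        have hg : g i - g (i + 1) = 2 / √((i + k : ℕ) - 1) - 2 / √((i + k : ℕ) : ℝ) := by
          simp only [g]; push_cast; ring_nf
        exact hg ▸ one_div_rpow_three_halves_le (by exact_mod_cast (by omega : 1 < i + k))
    _ = g 0 - g m := sum_range_sub' g m
    _ ≤ g 0 := sub_le_self _ (by positivity)
    _ = 2 / √(k - 1) := by simp [g]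

lemma riemannZeta_ofReal_re {s : ℝ} (hs : 1 < s) :
    (riemannZeta s).re = ∑' n : ℕ, 1 / (n : ℝ) ^ s := by
  have hterm (n : ℕ) : 1 / (n : ℂ) ^ (s : ℂ) = ((1 / (n : ℝ) ^ s : ℝ) : ℂ) := by
    rw [Complex.ofReal_div, Complex.ofReal_one, Complex.ofReal_cpow n.cast_nonneg,
      Complex.ofReal_natCast]
  rw [zeta_eq_tsum_one_div_nat_cpow (by simpa using hs)]
  simp_rw [hterm]
  rw [← Complex.ofReal_tsum, Complex.ofReal_re]

lemma riemannZeta_three_halves_re_le : (riemannZeta (3 / 2)).re ≤ 1 + 5 * √2 / 4 := by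
  have hs2 : √2 ^ 2 = 2 := sq_sqrt zero_le_two
  have hhead : ∑ n ∈ range 3, 1 / (n : ℝ) ^ (3 / 2 : ℝ) = 1 + 1 / (2 * √2) := by
    simp [sum_range_succ, rpow_three_halves]
  have htail := tsum_one_div_nat_add_rpow_three_halves_le (k := 3) (by norm_num)
  rw [show (3 / 2 : ℂ) = ((3 / 2 : ℝ) : ℂ) by push_cast; rfl, riemannZeta_ofReal_re (by norm_num),
    ← (summable_one_div_nat_rpow.2 (by norm_num)).sum_add_tsum_nat_add 3, hhead]
  calc 1 + 1 / (2 * √2) + ∑' i : ℕ, 1 / ((i + 3 : ℕ) : ℝ) ^ (3 / 2 : ℝ)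
      ≤ 1 + 1 / (2 * √2) + 2 / √2 := by norm_num at htail ⊢; linarith
    _ = 1 + 5 * √2 / 4 := by field_simp; nlinarith

lemma exp_one_terms_gt {t : ℝ}
    (ht : t = 2 * (exp 1 ^ 2 - 3 * exp 1 + 1) / (exp 1 ^ 2 - 2 * exp 1 - 1)) :
    -(4 / 5) < t ^ 2 / 4 - (t - 1) ^ 2 / (2 * (exp 1 - 1) ^ 2) -
      (t * (exp 1 - 2) + 1) / (exp 1 - 1) := by
  have he₁ : 2.718 < exp 1 := lt_trans (by norm_num) exp_one_gt_d9
  have he₂ : exp 1 < 2.719 := lt_trans exp_one_lt_d9 (by norm_num)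
  have hden : 0.95 < exp 1 ^ 2 - 2 * exp 1 - 1 := by nlinarith
  have ht₁ : 0.48 < t := by rw [ht, lt_div_iff₀ (by linarith)]; nlinarith
  have ht₂ : t < 0.5 := by rw [ht, div_lt_iff₀ (by linarith)]; nlinarith
  have h₁ : (t - 1) ^ 2 / (2 * (exp 1 - 1) ^ 2) < 0.05 := by
    rw [div_lt_iff₀ (by nlinarith)]; nlinarith
  have h₂ : (t * (exp 1 - 2) + 1) / (exp 1 - 1) < 0.8 := by
    rw [div_lt_iff₀ (by linarith)]; nlinarith
  nlinarith

theorem zeta_three_halves_bound :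
    (riemannZeta (3/2)).re <
      (2 / Real.sqrt π) *
        (2 * Real.sqrt 2 * Real.arctan (1 / Real.sqrt 2) + π^2 / 6 +
          (2 * (Real.exp 1 ^ 2 - 3 * Real.exp 1 + 1) / (Real.exp 1 ^ 2 - 2 * Real.exp 1 - 1))^2 / 4 -
          (2 * (Real.exp 1 ^ 2 - 3 * Real.exp 1 + 1) / (Real.exp 1 ^ 2 - 2 * Real.exp 1 - 1) - 1)^2 /
            (2 * (Real.exp 1 - 1)^2) -
          (2 * (Real.exp 1 ^ 2 - 3 * Real.exp 1 + 1) / (Real.exp 1 ^ 2 - 2 * Real.exp 1 - 1) *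
            (Real.exp 1 - 2) + 1) / (Real.exp 1 - 1)) := by
  have hζ : (riemannZeta (3 / 2)).re < 2.768 := by
    have hsqrt2 : √2 < 1.4143 := (sqrt_lt' (by norm_num)).2 (by norm_num)
    linarith [riemannZeta_three_halves_re_le]
  have hsqrtπ : √π < 1.7725 := (sqrt_lt' (by norm_num)).2 (by nlinarith [pi_lt_d4])
  have harctan : 5 / 3 ≤ 2 * √2 * arctan (1 / √2) := by
    have hs2 : √2 ^ 2 = 2 := sq_sqrt zero_le_two
    calc (5 / 3 : ℝ) = 2 * √2 * (1 / √2 - (1 / √2) ^ 3 / 3) := by field_simp; nlinarith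
      _ ≤ 2 * √2 * arctan (1 / √2) :=
        mul_le_mul_of_nonneg_left (sub_pow_three_div_three_le_arctan (by positivity))
          (by positivity)
  have hπ : 1.644 < π ^ 2 / 6 := by nlinarith [pi_gt_d4]
  have he := exp_one_terms_gt rfl
  have hsqrtπpos : 0 < √π := sqrt_pos.2 pi_pos
  rw [div_mul_eq_mul_div, lt_div_iff₀ hsqrtπpos]
  nlinarith
end
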